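/- Let n ≥ 2, N := 2^n, γ := sin^2(π/8), and z_j := e^{2πij/N} for j ∈ ℤ. Then for every even integer j and every r ∈ {-1, 1}, max{|P_n(z_j)|^2, |P_n(z_{j+r})|^2} ≥ γ · 2^{n+1} = 2γN, where P_n is the n-th Rudin-Shapiro polynomial. -/

import Mathlib

/-!
Attach to a pair `(p, q)` of complex numbers its Bloch vector `((|p|² - |q|²) / 2, p̄ q)` in
`ℝ × ℂ`, of length `(|p|² + |q|²) / 2`. For `|c| = 1` the Bloch vector of `(p + c q, p - c q)`
is twice the image, under a fixed isometry, of that of `(p, q)` with its `ℂ`-component rotated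
by `c`. So along the Rudin–Shapiro recursion the angle between the Bloch vectors of `(P_k, Q_k)`
at `e^{iθ}` and at `e^{iφ}` grows by at most `2^k |φ - θ|` per step; for neighbouring `2^n`-th
roots of unity it is at most `π / 2` at level `m = n - 2`. For even `j` we have
`P_n(z_j) = 2 P_m(z_j)` and `P_n(z_{j±1}) = 2 z_{j±1}^{2^m} Q_m(z_{j±1})`. If both
`|P_m(z_j)|²` and `|Q_m(z_{j±1})|²` were below `sin²(π/8) 2^{m+1}`, the two Bloch vectors would
lie in the opposite cones of half-angle `π / 4` around the first axis, at an angle larger than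
`π / 2`.
-/

open Complex Real

noncomputable def RS : ℕ → (ℂ → ℂ) × (ℂ → ℂ)
  | 0 => (fun _ => 1, fun _ => 1)
  | n + 1 =>
      (fun z => (RS n).1 z + z ^ (2 ^ n) * (RS n).2 z,
       fun z => (RS n).1 z - z ^ (2 ^ n) * (RS n).2 z)

noncomputable def P (n : ℕ) (z : ℂ) : ℂ := (RS n).1 z

noncomputable def Q (n : ℕ) (z : ℂ) : ℂ := (RS n).2 z

open ComplexConjugate InnerProductGeometry
open scoped RealInnerProductSpace

lemma P_succ (k : ℕ) (z : ℂ) : P (k + 1) z = P k z + z ^ 2 ^ k * Q k z := rfl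

lemma Q_succ (k : ℕ) (z : ℂ) : Q (k + 1) z = P k z - z ^ 2 ^ k * Q k z := rfl

lemma normSq_P_add_normSq_Q {z : ℂ} (hz : ‖z‖ = 1) (k : ℕ) :
    normSq (P k z) + normSq (Q k z) = 2 ^ (k + 1) := by
  induction k with
  | zero => norm_num [P, Q, RS]
  | succ k ih =>
    have hzk : normSq (z ^ 2 ^ k * Q k z) = normSq (Q k z) := by
      rw [normSq_mul, map_pow, normSq_eq_norm_sq, hz, one_pow, one_pow, one_mul]
    rw [P_succ, Q_succ, normSq_add, normSq_sub, hzk, pow_succ _ (k + 1)]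
    linarith

lemma P_add_two_of_pow_eq_one {z : ℂ} {m : ℕ} (hz : z ^ 2 ^ (m + 1) = 1) :
    P (m + 2) z = 2 * P m z := by
  rw [P_succ, hz, P_succ, Q_succ]; ring

lemma P_add_two_of_pow_eq_neg_one {z : ℂ} {m : ℕ} (hz : z ^ 2 ^ (m + 1) = -1) :
    P (m + 2) z = 2 * z ^ 2 ^ m * Q m z := by
  rw [P_succ, hz, P_succ, Q_succ]; ring

noncomputable def blochVector (p q : ℂ) : WithLp 2 (ℝ × ℂ) :=
  WithLp.toLp 2 ((normSq p - normSq q) / 2, conj p * q)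

noncomputable def rotateSnd (w : ℂ) (x : WithLp 2 (ℝ × ℂ)) : WithLp 2 (ℝ × ℂ) :=
  WithLp.toLp 2 (x.fst, w * x.snd)

lemma norm_blochVector (p q : ℂ) : ‖blochVector p q‖ = (normSq p + normSq q) / 2 := by
  have hnonneg : 0 ≤ (normSq p + normSq q) / 2 :=
    div_nonneg (add_nonneg (normSq_nonneg p) (normSq_nonneg q)) zero_le_two
  rw [← sq_eq_sq₀ (norm_nonneg _) hnonneg, WithLp.prod_norm_sq_eq_of_L2]
  simp only [blochVector, WithLp.toLp_fst, WithLp.toLp_snd, Real.norm_eq_abs, sq_abs, norm_mul,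
    Complex.norm_conj, mul_pow, ← normSq_eq_norm_sq]
  ring

lemma norm_rotateSnd {w : ℂ} (hw : ‖w‖ = 1) (x : WithLp 2 (ℝ × ℂ)) :
    ‖rotateSnd w x‖ = ‖x‖ := by
  rw [← sq_eq_sq₀ (norm_nonneg _) (norm_nonneg _), WithLp.prod_norm_sq_eq_of_L2,
    WithLp.prod_norm_sq_eq_of_L2]
  simp [rotateSnd, hw]

lemma angle_rotateSnd_le {w : ℂ} (hw : ‖w‖ = 1) {x : WithLp 2 (ℝ × ℂ)} (hx : x ≠ 0) :
    angle x (rotateSnd w x) ≤ arccos w.re := by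
  refine arccos_le_arccos ?_
  have hx2 : 0 < ‖x‖ ^ 2 := by positivity
  rw [norm_rotateSnd hw, ← sq, le_div_iff₀ hx2, WithLp.prod_norm_sq_eq_of_L2,
    WithLp.prod_inner_apply]
  have hw1 : w.re ≤ 1 := (re_le_norm w).trans hw.le
  have hX : ⟪x.snd, w * x.snd⟫ = w.re * ‖x.snd‖ ^ 2 := by
    rw [Complex.inner, mul_assoc, mul_conj, re_mul_ofReal, normSq_eq_norm_sq]
  simp only [rotateSnd, WithLp.ofLp_fst, WithLp.ofLp_snd, hX]
  nlinarith [sq_nonneg x.fst, real_inner_self_eq_norm_sq x.fst]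

lemma inner_blochVector_add_sub {c d : ℂ} (hc : ‖c‖ = 1) (hd : ‖d‖ = 1) (p q p' q' : ℂ) :
    ⟪blochVector (p + c * q) (p - c * q), blochVector (p' + d * q') (p' - d * q')⟫ =
      4 * ⟪blochVector p q, rotateSnd (conj c * d) (blochVector p' q')⟫ := by
  have hc' : conj c = c⁻¹ := (inv_eq_of_mul_eq_one_right (by
    rw [mul_conj, normSq_eq_norm_sq, hc]; simp)).symm
  have hd' : conj d = d⁻¹ := (inv_eq_of_mul_eq_one_right (by
    rw [mul_conj, normSq_eq_norm_sq, hd]; simp)).symm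
  have hc0 : c ≠ 0 := norm_ne_zero_iff.mp (by simp [hc])
  have hd0 : d ≠ 0 := norm_ne_zero_iff.mp (by simp [hd])
  have hre : ∀ w : ℂ, (w.re : ℂ) = (w + conj w) / 2 := fun w => by
    rw [add_conj]; push_cast; ring
  apply ofReal_injective
  simp only [blochVector, rotateSnd, WithLp.prod_inner_apply, WithLp.toLp_fst, WithLp.toLp_snd,
    Complex.inner, RCLike.inner_apply, conj_trivial]
  push_cast
  -- with `Re w = (w + w̄) / 2`, `c̄ = c⁻¹` and `d̄ = d⁻¹` this is an identity of rational functions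
  simp only [hre, ← mul_conj, map_add, map_sub, map_mul, conj_conj, hc', hd', map_inv₀, inv_inv]
  field_simp
  ring

lemma norm_blochVector_add_sub {c : ℂ} (hc : ‖c‖ = 1) (p q : ℂ) :
    ‖blochVector (p + c * q) (p - c * q)‖ = 2 * ‖blochVector p q‖ := by
  have hcq : normSq (c * q) = normSq q := by
    rw [normSq_mul, normSq_eq_norm_sq c, hc, one_pow, one_mul]
  rw [norm_blochVector, norm_blochVector, normSq_add, normSq_sub, hcq]
  ring

lemma angle_blochVector_add_sub {c d : ℂ} (hc : ‖c‖ = 1) (hd : ‖d‖ = 1) (p q p' q' : ℂ) :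
    angle (blochVector (p + c * q) (p - c * q)) (blochVector (p' + d * q') (p' - d * q')) =
      angle (blochVector p q) (rotateSnd (conj c * d) (blochVector p' q')) := by
  have hw : ‖conj c * d‖ = 1 := by rw [norm_mul, Complex.norm_conj, hc, hd, one_mul]
  unfold angle
  rw [inner_blochVector_add_sub hc hd, norm_blochVector_add_sub hc, norm_blochVector_add_sub hd,
    norm_rotateSnd hw, mul_mul_mul_comm, show (2 : ℝ) * 2 = 4 by norm_num,
    mul_div_mul_left _ _ four_ne_zero]

lemma angle_blochVector_add_sub_le {c d : ℂ} (hc : ‖c‖ = 1) (hd : ‖d‖ = 1) (p q : ℂ) {p' q' : ℂ}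
    (h : blochVector p' q' ≠ 0) :
    angle (blochVector (p + c * q) (p - c * q)) (blochVector (p' + d * q') (p' - d * q')) ≤
      angle (blochVector p q) (blochVector p' q') + arccos (conj c * d).re := by
  have hw : ‖conj c * d‖ = 1 := by rw [norm_mul, Complex.norm_conj, hc, hd, one_mul]
  rw [angle_blochVector_add_sub hc hd]
  grw [angle_le_angle_add_angle _ (blochVector p' q'), angle_rotateSnd_le hw h]

lemma Real.arccos_cos_le_abs (x : ℝ) : arccos (Real.cos x) ≤ |x| := by
  rcases le_or_gt |x| π with hx | hx
  · rw [← Real.cos_abs, arccos_cos (abs_nonneg x) hx]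
  · exact (arccos_le_pi _).trans hx.le

lemma norm_blochVector_P_Q {z : ℂ} (hz : ‖z‖ = 1) (k : ℕ) :
    ‖blochVector (P k z) (Q k z)‖ = 2 ^ k := by
  rw [norm_blochVector, normSq_P_add_normSq_Q hz, pow_succ]
  ring

lemma angle_blochVector_P_Q_le (θ φ : ℝ) (k : ℕ) :
    angle (blochVector (P k (exp (θ * I))) (Q k (exp (θ * I))))
      (blochVector (P k (exp (φ * I))) (Q k (exp (φ * I)))) ≤ (2 ^ k - 1) * |φ - θ| := by
  induction k with
  | zero => simp [P, Q, RS, blochVector]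
  | succ k ih =>
    have hθ : ‖exp (θ * I) ^ 2 ^ k‖ = 1 := by rw [norm_pow, norm_exp_ofReal_mul_I, one_pow]
    have hφ : ‖exp (φ * I) ^ 2 ^ k‖ = 1 := by rw [norm_pow, norm_exp_ofReal_mul_I, one_pow]
    have hne : blochVector (P k (exp (φ * I))) (Q k (exp (φ * I))) ≠ 0 := by
      rw [← norm_ne_zero_iff, norm_blochVector_P_Q (norm_exp_ofReal_mul_I φ)]
      positivity
    have hrot : (conj (exp (θ * I) ^ 2 ^ k) * exp (φ * I) ^ 2 ^ k).re =
        Real.cos (2 ^ k * (φ - θ)) := by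
      rw [map_pow, ← exp_conj, ← Complex.exp_nat_mul, ← Complex.exp_nat_mul, ← Complex.exp_add,
        ← exp_ofReal_mul_I_re]
      congr 2
      simp only [map_mul, conj_ofReal, conj_I]
      push_cast
      ring
    have key := angle_blochVector_add_sub_le hθ hφ (P k (exp (θ * I))) (Q k (exp (θ * I))) hne
    rw [hrot] at key
    rw [P_succ, Q_succ, P_succ, Q_succ]
    calc _ ≤ _ := key
      _ ≤ (2 ^ k - 1) * |φ - θ| + 2 ^ k * |φ - θ| := by
        refine add_le_add ih ((Real.arccos_cos_le_abs _).trans_eq ?_)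
        rw [abs_mul, abs_of_pos (by positivity)]
      _ = _ := by ring

lemma angle_blochVector_P_Q_le_pi_div_two {θ φ : ℝ} {m : ℕ} (h : |φ - θ| ≤ π / 2 ^ (m + 1)) :
    angle (blochVector (P m (exp (θ * I))) (Q m (exp (θ * I))))
      (blochVector (P m (exp (φ * I))) (Q m (exp (φ * I)))) ≤ π / 2 := by
  calc _ ≤ (2 ^ m - 1) * |φ - θ| := angle_blochVector_P_Q_le θ φ m
    _ ≤ 2 ^ m * (π / 2 ^ (m + 1)) := by gcongr; linarith
    _ = π / 2 := by field_simp; ring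

lemma inner_neg_of_norm_snd_lt {E : Type*} [NormedAddCommGroup E] [InnerProductSpace ℝ E]
    {x y : WithLp 2 (ℝ × E)} (hx : ‖x.snd‖ < -x.fst) (hy : ‖y.snd‖ < y.fst) : ⟪x, y⟫ < 0 := by
  rw [WithLp.prod_inner_apply, WithLp.ofLp_fst, WithLp.ofLp_fst, WithLp.ofLp_snd,
    WithLp.ofLp_snd, RCLike.inner_apply, conj_trivial]
  have hXY : ‖x.snd‖ * ‖y.snd‖ < -x.fst * y.fst :=
    mul_lt_mul'' hx hy (norm_nonneg _) (norm_nonneg _)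
  linarith [real_inner_le_norm x.snd y.snd]

lemma sin_sq_pi_div_eight : Real.sin (π / 8) ^ 2 = (2 - √2) / 4 := by
  have h : √2 ≤ 2 := Real.sqrt_le_iff.2 ⟨zero_le_two, by norm_num⟩
  rw [Real.sin_pi_div_eight, div_pow, Real.sq_sqrt (by linarith)]
  norm_num

lemma norm_snd_blochVector_lt {p q : ℂ}
    (h : normSq p < Real.sin (π / 8) ^ 2 * (normSq p + normSq q)) :
    ‖(blochVector p q).snd‖ < -(blochVector p q).fst := by
  simp only [blochVector, WithLp.toLp_fst, WithLp.toLp_snd, norm_mul, Complex.norm_conj]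
  rw [sin_sq_pi_div_eight] at h
  set a := normSq p
  set b := normSq q
  have ha : 0 ≤ a := normSq_nonneg p
  have hb : 0 ≤ b := normSq_nonneg q
  have h2 : √2 ^ 2 = 2 := Real.sq_sqrt zero_le_two
  have h2pos : 0 ≤ √2 := Real.sqrt_nonneg 2
  have hab : (‖p‖ * ‖q‖) ^ 2 = a * b := by simp only [a, b, mul_pow, normSq_eq_norm_sq]
  -- the two roots of `a ↦ (b - a)² / 4 - a b` for fixed `a + b` are `(2 ∓ √2) / 4 * (a + b)`
  have hfactor : (-((a - b) / 2)) ^ 2 - a * b =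
      2 * ((2 - √2) / 4 * (a + b) - a) * ((2 + √2) / 4 * (a + b) - a) := by
    linear_combination (a + b) ^ 2 / 8 * h2
  apply lt_of_pow_lt_pow_left₀ 2 (by nlinarith [mul_nonneg ha h2pos])
  nlinarith [mul_pos (sub_pos.2 h) (show 0 < (2 + √2) / 4 * (a + b) - a by nlinarith)]

lemma le_normSq_or_le_normSq_of_angle_blochVector_le {p q p' q' : ℂ}
    (h : angle (blochVector p q) (blochVector p' q') ≤ π / 2) :
    Real.sin (π / 8) ^ 2 * (normSq p + normSq q) ≤ normSq p ∨
      Real.sin (π / 8) ^ 2 * (normSq p' + normSq q') ≤ normSq q' := by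
  by_contra! hcon
  obtain ⟨hpq, hpq'⟩ := hcon
  have hx := norm_snd_blochVector_lt hpq
  have hy : ‖(blochVector p' q').snd‖ < (blochVector p' q').fst := by
    have := norm_snd_blochVector_lt (p := q') (q := p') (by rwa [add_comm])
    simp only [blochVector, WithLp.toLp_fst, WithLp.toLp_snd, norm_mul, Complex.norm_conj] at this ⊢
    linarith
  have hinner : 0 ≤ ⟪blochVector p q, blochVector p' q'⟫ := by
    have h0 := angle_nonneg (blochVector p q) (blochVector p' q')
    rw [← cos_angle_mul_norm_mul_norm]
    exact mul_nonneg (Real.cos_nonneg_of_mem_Icc ⟨by linarith [pi_pos], h⟩) (by positivity)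
  exact (inner_neg_of_norm_snd_lt hx hy).not_ge hinner

lemma exp_two_pi_mul_int_div_two_pow_mul_I_pow (k : ℤ) (m : ℕ) :
    exp (↑(2 * π * k / 2 ^ (m + 1)) * I) ^ 2 ^ m = (-1) ^ k := by
  rw [← Complex.exp_nat_mul, ← exp_pi_mul_I, ← Complex.exp_int_mul]
  congr 1
  push_cast
  field_simp
  ring

theorem rs_large_at_consecutive_roots (n : ℕ) (hn : 2 ≤ n) (N : ℕ) (hN : N = 2 ^ n)
    (z : ℤ → ℂ) (hz : ∀ j : ℤ, z j = Complex.exp (2 * Real.pi * Complex.I * j / N))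
    (j : ℤ) (hj : Even j) (r : ℤ) (hr : r = -1 ∨ r = 1) :
    max (‖P n (z j)‖ ^ 2) (‖P n (z (j + r))‖ ^ 2) ≥
      Real.sin (Real.pi / 8) ^ 2 * 2 ^ (n + 1) := by
  obtain ⟨m, rfl⟩ : ∃ m, n = m + 2 := ⟨n - 2, by omega⟩
  have hroot : ∀ k : ℤ, z k = exp (↑(2 * π * k / 2 ^ (m + 2)) * I) := fun k => by
    rw [hz, hN]; push_cast; ring_nf
  have hnorm : ∀ k, ‖z k‖ = 1 := fun k => by rw [hroot, norm_exp_ofReal_mul_I]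
  have hodd : Odd (j + r) := by rcases hr with rfl | rfl <;> simp [hj, parity_simps]
  have hPu : ‖P (m + 2) (z j)‖ ^ 2 = 4 * normSq (P m (z j)) := by
    rw [P_add_two_of_pow_eq_one (by rw [hroot, exp_two_pi_mul_int_div_two_pow_mul_I_pow,
      hj.neg_one_zpow]), ← normSq_eq_norm_sq, normSq_mul]
    norm_num
  have hPv : ‖P (m + 2) (z (j + r))‖ ^ 2 = 4 * normSq (Q m (z (j + r))) := by
    rw [P_add_two_of_pow_eq_neg_one (by rw [hroot, exp_two_pi_mul_int_div_two_pow_mul_I_pow,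
      hodd.neg_one_zpow]), ← normSq_eq_norm_sq, normSq_mul, normSq_mul, map_pow,
      normSq_eq_norm_sq (z _), hnorm]
    norm_num
  have hangle : angle (blochVector (P m (z j)) (Q m (z j)))
      (blochVector (P m (z (j + r))) (Q m (z (j + r)))) ≤ π / 2 := by
    have hr' : |(r : ℝ)| = 1 := by rcases hr with rfl | rfl <;> norm_num
    rw [hroot, hroot]
    refine angle_blochVector_P_Q_le_pi_div_two (le_of_eq ?_)
    rw [← sub_div, ← mul_sub, Int.cast_add, add_sub_cancel_left, abs_div, abs_mul, hr',
      abs_of_pos (by positivity), abs_of_pos (by positivity), pow_succ _ (m + 1)]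
    ring
  rw [ge_iff_le, le_max_iff, hPu, hPv, show (2 : ℝ) ^ (m + 2 + 1) = 4 * 2 ^ (m + 1) by ring]
  rcases le_normSq_or_le_normSq_of_angle_blochVector_le hangle with h | h
  · rw [normSq_P_add_normSq_Q (hnorm j)] at h
    left; linarith
  · rw [normSq_P_add_normSq_Q (hnorm (j + r))] at h
    right; linarith
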